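/- Let v₁,…,v₁₁ ∈ ℝ³ be the columns of V = [[378^{1/6},0,0,√3,√3,0,0,√3,√3,√3,√3],[0,378^{1/6},0,0,0,√3,√3,√3,−√3,√3,−√3],[0,0,280^{1/6},2,−2,2,−2,1,1,−1,−1]]. Then (v_j) is an 11-point weighted spherical (3,3)-design for ℝ³: Σ_{j=1}^{11} Σ_{k=1}^{11} |⟨v_j,v_k⟩|⁶ = (1/7)·(Σ_{ℓ=1}^{11} ‖v_ℓ‖⁶)². -/

import Mathlib

open Real Matrix

/-- The `3×11` matrix of the Reznick `11`-point weighted spherical `(3,3)`-design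
for `ℝ³`. -/
noncomputable def V : Matrix (Fin 3) (Fin 11) ℝ :=
  !![(378 : ℝ) ^ ((1 : ℝ)/6), 0, 0, Real.sqrt 3, Real.sqrt 3, 0, 0,
       Real.sqrt 3, Real.sqrt 3, Real.sqrt 3, Real.sqrt 3;
     0, (378 : ℝ) ^ ((1 : ℝ)/6), 0, 0, 0, Real.sqrt 3, Real.sqrt 3,
       Real.sqrt 3, -Real.sqrt 3, Real.sqrt 3, -Real.sqrt 3;
     0, 0, (280 : ℝ) ^ ((1 : ℝ)/6), 2, -2, 2, -2, 1, 1, -1, -1]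

/-! Reznick's identity says that the columns `vⱼ` of `V` satisfy `Σⱼ ⟨vⱼ, x⟩⁶ = 540 ‖x‖⁶` for
every `x`. Taking `x = vₖ` and summing over `k` gives `Σⱼ Σₖ ⟨vⱼ, vₖ⟩⁶ = 540 Σₖ ‖vₖ‖⁶`, and since
`Σₖ ‖vₖ‖⁶ = 3780 = 7 · 540` the right-hand side is `(1/7) (Σₖ ‖vₖ‖⁶)²`. -/

theorem sum_sum_abs_pow_eq_of_sum_pow_eq {m n : Type*} [Fintype m] [Fintype n]
    (M : Matrix m n ℝ) (t : ℕ) (C : ℝ)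
    (h : ∀ x : m → ℝ, ∑ j, (∑ i, M i j * x i) ^ (2 * t) = C * (∑ i, x i ^ 2) ^ t) :
    ∑ j, ∑ k, |∑ i, M i j * M i k| ^ (2 * t) = C * ∑ k, (∑ i, M i k ^ 2) ^ t := by
  simp only [(even_two_mul t).pow_abs]
  rw [Finset.sum_comm, Finset.mul_sum]
  exact Finset.sum_congr rfl fun k _ => h fun i => M i k

theorem reznick_identity (x y z : ℝ) :
    540 * (x ^ 2 + y ^ 2 + z ^ 2) ^ 3 =
      378 * x ^ 6 + 378 * y ^ 6 + 280 * z ^ 6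
        + (√3 * x + 2 * z) ^ 6 + (√3 * x - 2 * z) ^ 6
        + (√3 * y + 2 * z) ^ 6 + (√3 * y - 2 * z) ^ 6
        + (√3 * x + √3 * y + z) ^ 6 + (√3 * x - √3 * y + z) ^ 6
        + (√3 * x + √3 * y - z) ^ 6 + (√3 * x - √3 * y - z) ^ 6 := by
  have h2 : √3 ^ 2 = 3 := sq_sqrt (by norm_num)
  have h4 : √3 ^ 4 = 9 := by rw [show 4 = 2 * 2 from rfl, pow_mul, h2]; norm_num
  have h6 : √3 ^ 6 = 27 := by rw [show 6 = 2 * 3 from rfl, pow_mul, h2]; norm_num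
  ring_nf
  rw [h2, h4, h6]
  ring

theorem rpow_one_div_six_pow_six {a : ℝ} (ha : 0 ≤ a) : (a ^ ((1 : ℝ) / 6)) ^ 6 = a := by
  rw [one_div]
  exact_mod_cast rpow_inv_natCast_pow ha (n := 6) (by norm_num)

theorem sum_inner_col_V_pow_six (x : Fin 3 → ℝ) :
    ∑ j, (∑ i, V i j * x i) ^ 6 = 540 * (∑ i, x i ^ 2) ^ 3 := by
  have h378 : ((378 : ℝ) ^ ((1 : ℝ) / 6)) ^ 6 = 378 := rpow_one_div_six_pow_six (by norm_num)
  have h280 : ((280 : ℝ) ^ ((1 : ℝ) / 6)) ^ 6 = 280 := rpow_one_div_six_pow_six (by norm_num)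
  simp only [V, of_apply, cons_val', cons_val_fin_one, Fin.sum_univ_succ, Fin.isValue,
    cons_val_zero, cons_val_succ, Fin.succ_zero_eq_one, Finset.univ_unique, Fin.default_eq_zero,
    Finset.sum_singleton, Fin.succ_one_eq_two]
  linear_combination (reznick_identity (x 0) (x 1) (x 2)).symm
    + x 0 ^ 6 * h378 + x 1 ^ 6 * h378 + x 2 ^ 6 * h280

theorem sum_norm_sq_col_V_pow_three : ∑ l, (∑ i, V i l ^ 2) ^ 3 = 3780 := by
  have h378 : ((378 : ℝ) ^ ((1 : ℝ) / 6)) ^ 6 = 378 := rpow_one_div_six_pow_six (by norm_num)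
  have h280 : ((280 : ℝ) ^ ((1 : ℝ) / 6)) ^ 6 = 280 := rpow_one_div_six_pow_six (by norm_num)
  have h3 : √3 ^ 2 = 3 := sq_sqrt (by norm_num)
  simp only [V, of_apply, cons_val', cons_val_fin_one, Fin.sum_univ_succ, Fin.isValue,
    cons_val_zero, cons_val_succ, Finset.univ_unique, Fin.default_eq_zero, Finset.sum_singleton,
    neg_sq, h3]
  linear_combination 2 * h378 + h280

/-- The columns `v₁,…,v₁₁` of `V` form an `11`-point weighted spherical `(3,3)`-design
for `ℝ³`:  `Σ_j Σ_k |⟨v_j, v_k⟩|⁶ = (1/7)·(Σ_ℓ ‖v_ℓ‖⁶)²`. -/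
theorem reznick_design :
    ∑ j : Fin 11, ∑ k : Fin 11, |∑ i : Fin 3, V i j * V i k| ^ 6 =
      (1/7 : ℝ) * (∑ l : Fin 11, (∑ i : Fin 3, V i l ^ 2) ^ 3) ^ 2 := by
  rw [sum_sum_abs_pow_eq_of_sum_pow_eq V 3 540 sum_inner_col_V_pow_six, sum_norm_sq_col_V_pow_three]
  norm_num
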